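/- Let (X,d) be a metric space with |X| ≥ 3, T : X → X a generalized Kannan type mapping with λ ∈ [0, 2/3) satisfying T(T(x)) ≠ x whenever Tx ≠ x, and let x₀ ∈ X with iterates xₙ₊₁ = Txₙ. If no xₙ is a fixed point of T, then for all n ≥ 1, the points xₙ₋₁, xₙ, xₙ₊₁ are pairwise distinct and d(xₙ₊₁, xₙ₊₂) ≤ (2λ/(2−λ)) · max{d(xₙ₋₁, xₙ), d(xₙ, xₙ₊₁)}. -/

import Mathlib

/-!
Apply the Kannan inequality to the three consecutive iterates `x, Tx, T²x`: the triangle inequality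
`d(T²x, T³x) ≤ d(Tx, T²x) + d(Tx, T³x)` absorbs two of the three terms on the left, leaving
`(2 - λ) d(T²x, T³x) ≤ λ (d(x, Tx) + d(Tx, T²x)) ≤ 2λ max {d(x, Tx), d(Tx, T²x)}`.
The three iterates are pairwise distinct because no iterate is fixed and `T` has no 2-cycles.
-/

section GeneralizedKannan

variable {X : Type*} [PseudoMetricSpace X]

def IsGeneralizedKannan (T : X → X) (l : ℝ) : Prop :=
  ∀ x y z : X, x ≠ y → y ≠ z → x ≠ z →
    dist (T x) (T y) + dist (T y) (T z) + dist (T x) (T z) ≤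
      l * (dist x (T x) + dist y (T y) + dist z (T z))

namespace IsGeneralizedKannan

variable {T : X → X} {l : ℝ} {x : X}

theorem sub_mul_dist_iterate_le (hT : IsGeneralizedKannan T l)
    (h01 : x ≠ T x) (h12 : T x ≠ T (T x)) (h02 : x ≠ T (T x)) :
    (2 - l) * dist (T (T x)) (T (T (T x))) ≤ l * (dist x (T x) + dist (T x) (T (T x))) := by
  have hK := hT x (T x) (T (T x)) h01 h12 h02
  have htri := dist_triangle_left (T (T x)) (T (T (T x))) (T x)
  linarith

theorem dist_iterate_le_mul_max (hT : IsGeneralizedKannan T l) (hl0 : 0 ≤ l) (hl : l < 2)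
    (h01 : x ≠ T x) (h12 : T x ≠ T (T x)) (h02 : x ≠ T (T x)) :
    dist (T (T x)) (T (T (T x))) ≤
      2 * l / (2 - l) * max (dist x (T x)) (dist (T x) (T (T x))) := by
  have hsum : dist x (T x) + dist (T x) (T (T x)) ≤
      2 * max (dist x (T x)) (dist (T x) (T (T x))) := by
    linarith [le_max_left (dist x (T x)) (dist (T x) (T (T x))),
      le_max_right (dist x (T x)) (dist (T x) (T (T x)))]
  rw [div_mul_eq_mul_div, le_div_iff₀ (by linarith), mul_comm]
  calc (2 - l) * dist (T (T x)) (T (T (T x)))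
      ≤ l * (dist x (T x) + dist (T x) (T (T x))) := hT.sub_mul_dist_iterate_le h01 h12 h02
    _ ≤ l * (2 * max (dist x (T x)) (dist (T x) (T (T x)))) := by gcongr
    _ = 2 * l * max (dist x (T x)) (dist (T x) (T (T x))) := by ring

end IsGeneralizedKannan

end GeneralizedKannan

theorem stmt_5_general {X : Type*} [MetricSpace X] (T : X → X)
    (l : ℝ) (hl0 : 0 ≤ l) (hl : l < 2/3)
    (hGK : ∀ x y z : X, x ≠ y → y ≠ z → x ≠ z →
      dist (T x) (T y) + dist (T y) (T z) + dist (T x) (T z) ≤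
        l * (dist x (T x) + dist y (T y) + dist z (T z)))
    (hi : ∀ x : X, T x ≠ x → T (T x) ≠ x)
    (x : ℕ → X) (hiter : ∀ n, x (n + 1) = T (x n))
    (hnf : ∀ n, T (x n) ≠ x n) :
    ∀ n : ℕ,
      (x n ≠ x (n+1) ∧ x (n+1) ≠ x (n+2) ∧ x n ≠ x (n+2)) ∧
      dist (x (n+2)) (x (n+3)) ≤
        (2*l/(2-l)) * max (dist (x n) (x (n+1))) (dist (x (n+1)) (x (n+2))) := by
  intro n
  have h01 : x n ≠ T (x n) := (hnf n).symm
  have h12 : T (x n) ≠ T (T (x n)) := hiter n ▸ (hnf (n + 1)).symm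
  have h02 : x n ≠ T (T (x n)) := (hi (x n) (hnf n)).symm
  rw [hiter (n + 2), hiter (n + 1), hiter n]
  exact ⟨⟨h01, h12, h02⟩,
    IsGeneralizedKannan.dist_iterate_le_mul_max hGK hl0 (by linarith) h01 h12 h02⟩

theorem stmt_5 {X : Type*} [MetricSpace X] (h3 : 3 ≤ Cardinal.mk X) (T : X → X)
    (l : ℝ) (hl0 : 0 ≤ l) (hl : l < 2/3)
    (hGK : ∀ x y z : X, x ≠ y → y ≠ z → x ≠ z →
      dist (T x) (T y) + dist (T y) (T z) + dist (T x) (T z) ≤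
        l * (dist x (T x) + dist y (T y) + dist z (T z)))
    (hi : ∀ x : X, T x ≠ x → T (T x) ≠ x)
    (x : ℕ → X) (hiter : ∀ n, x (n + 1) = T (x n))
    (hnf : ∀ n, T (x n) ≠ x n) :
    ∀ n : ℕ,
      (x n ≠ x (n+1) ∧ x (n+1) ≠ x (n+2) ∧ x n ≠ x (n+2)) ∧
      dist (x (n+2)) (x (n+3)) ≤
        (2*l/(2-l)) * max (dist (x n) (x (n+1))) (dist (x (n+1)) (x (n+2))) :=
  stmt_5_general T l hl0 hl hGK hi x hiter hnf
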